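/- Let (α,β) be an admissible non-null pair such that both α and β are eventually periodic (an ω ∈ Ω is eventually periodic if there is m ≥ 0 and a nonempty finite string s with S^mω = sss⋯ repeating s). Let B = B_{(α,β)}, Γ = Ω^•_{(α,β,−)}, and π(d) = Σ_{j∈ℤ} d(j)·B^{−j}. For a finite binary string s = s_0 ⋯ s_N let T′_s := {π(d) : d ∈ Γ, d(j) = 0 for all j < −N, and d(−N+i) = s_i for 0 ≤ i ≤ N}. Then the set of tile lengths {sup T′_s − inf T′_s : s a finite binary string with T′_s ≠ ∅} is finite. -/
import Mathlib


open scoped Classical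

/-- Infinite binary strings. -/
abbrev Omega : Type := ℕ → Bool

/-- The shift operator. -/
def shift (ω : Omega) : Omega := fun n => ω (n + 1)

/-- Strict lexicographic order on `Omega`. -/
def lexLt (σ ω : Omega) : Prop :=
  ∃ k : ℕ, (∀ i, i < k → σ i = ω i) ∧ σ k < ω k

/-- Non-strict lexicographic order on `Omega`. -/
def lexLe (σ ω : Omega) : Prop := lexLt σ ω ∨ σ = ω

/-- An admissible pair of strings. -/
def Admissible (α β : Omega) : Prop :=
  α 0 = false ∧ α 1 = true ∧ β 0 = true ∧ β 1 = false ∧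
  (∀ n : ℕ, ¬ (lexLt α (shift^[n] α) ∧ lexLe (shift^[n] α) β)) ∧
  (∀ n : ℕ, ¬ (lexLe α (shift^[n] β) ∧ lexLt (shift^[n] β) β))

/-- The address space `Ω_{(α,β,−)}`. -/
def OmegaMinus (α β : Omega) : Set Omega :=
  {ω | ∀ n : ℕ, ¬ (lexLt α (shift^[n] ω) ∧ lexLe (shift^[n] ω) β)}

/-- The address space `Ω_{(α,β,+)}`. -/
def OmegaPlus (α β : Omega) : Set Omega :=
  {ω | ∀ n : ℕ, ¬ (lexLe α (shift^[n] ω) ∧ lexLt (shift^[n] ω) β)}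

/-- The address space `Ω_{(α,β)}`. -/
def OmegaUnion (α β : Omega) : Set Omega := OmegaMinus α β ∪ OmegaPlus α β

/-- Length-`n` initial segments of the elements of `Γ`. -/
def initSegs (Γ : Set Omega) (n : ℕ) : Set (Fin n → Bool) :=
  (fun ω (i : Fin n) => ω i) '' Γ

/-- Exponential growth rate `h(Γ)`. -/
noncomputable def growth (Γ : Set Omega) : ℝ :=
  Filter.limsup (fun n : ℕ => Real.log ((initSegs Γ n).ncard) / (n : ℝ)) Filter.atTop

/-- The projection map `π_x`. -/
noncomputable def proj (x : ℝ) (ω : Omega) : ℝ :=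
  (1 - x) * ∑' k : ℕ, (if ω k then (1 : ℝ) else 0) * x ^ k

/-- The equation `Σ α_n x^n = Σ β_n x^n`. -/
def seriesEq (α β : Omega) (x : ℝ) : Prop :=
  (∑' n : ℕ, (if α n then (1 : ℝ) else 0) * x ^ n) =
    (∑' n : ℕ, (if β n then (1 : ℝ) else 0) * x ^ n)

/-- Solutions in `[1/2,1)` of `Σ α_n x^n = Σ β_n x^n`. -/
def baseSet (α β : Omega) : Set ℝ :=
  {x : ℝ | x ∈ Set.Ico (1/2 : ℝ) 1 ∧ seriesEq α β x}

/-- A decimal: a two-sided binary string vanishing far to the left. -/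
def IsDecimal (d : ℤ → Bool) : Prop := ∃ m : ℤ, ∀ j, j < m → d j = false

/-- Strict order on decimals. -/
def decLt (d e : ℤ → Bool) : Prop :=
  ∃ j : ℤ, (∀ i, i < j → d i = e i) ∧ d j < e j

/-- The set `Γ^•` of decimals obtained from strings in `Γ`. -/
def dot (Γ : Set Omega) : Set (ℤ → Bool) :=
  {d | ∃ m : ℤ, ∃ γ ∈ Γ, (∀ j, j < m → d j = false) ∧ ∀ i : ℕ, d (m + i) = γ i}

/-- Prepend a `0` to a string. -/
def cons0 (ω : Omega) : Omega := fun n => match n with | 0 => false | k + 1 => ω k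

/-- The space `Ω⁰_{(α,β,−)}`. -/
def Omega0Minus (α β : Omega) : Set Omega :=
  {ω ∈ OmegaMinus α β | lexLe (cons0 ω) α}

/-- The space `Ω⁰_{(α,β,+)}`. -/
def Omega0Plus (α β : Omega) : Set Omega :=
  {ω ∈ OmegaPlus α β | lexLt (cons0 ω) α}

/-- The address space of decimals `Ω^•_{(α,β,−)}`. -/
def dotMinus (α β : Omega) : Set (ℤ → Bool) := dot (Omega0Minus α β)

/-- The address space of decimals `Ω^•_{(α,β,+)}`. -/
def dotPlus (α β : Omega) : Set (ℤ → Bool) := dot (Omega0Plus α β)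

/-- The address space of decimals `Ω^•_{(α,β)}`. -/
def dotUnion (α β : Omega) : Set (ℤ → Bool) :=
  dot (Omega0Minus α β ∪ Omega0Plus α β)

/-- The radix map `d ↦ Σ_{j ∈ ℤ} d(j)·B^(−j)`. -/
noncomputable def radixVal (B : ℝ) (d : ℤ → Bool) : ℝ :=
  ∑' j : ℤ, (if d j then (1 : ℝ) else 0) * B ^ (-j)

/-- Shift invariance for a set of decimals. -/
def ShiftInvariantDec (Γ : Set (ℤ → Bool)) : Prop :=
  ∀ d ∈ Γ, ∀ k m : ℤ,
    (fun j : ℤ => if m ≤ j then d (j + k) else false) ∈ Γ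

/-- The tile `T′_s` for a finite string `s = s_0 ⋯ s_N`: the set of radix values of
decimals `d` in `Γ` with `d(j) = 0` for `j < −N` and `d(−N+i) = s_i` for `0 ≤ i ≤ N`. -/
def tileSet (Γ : Set (ℤ → Bool)) (B : ℝ) (N : ℕ) (s : ℕ → Bool) : Set ℝ :=
  {x : ℝ | ∃ d ∈ Γ, (∀ j : ℤ, j < -(N : ℤ) → d j = false) ∧
    (∀ i : ℕ, i ≤ N → d (-(N : ℤ) + i) = s i) ∧ radixVal B d = x}

/-- A string is eventually periodic if some shift of it is periodic. -/
def EventuallyPeriodic (ω : Omega) : Prop :=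
  ∃ m q : ℕ, 0 < q ∧ ∀ n : ℕ, ω (m + n + q) = ω (m + n)


lemma lexLt_irrefl (ω : Omega) : ¬ lexLt ω ω := by
  rintro ⟨k, -, h⟩; exact lt_irrefl _ h

lemma lexLt_asymm {σ ω : Omega} (h : lexLt σ ω) : ¬ lexLt ω σ := by
  rintro ⟨k2, h2, h2'⟩
  obtain ⟨k1, h1, h1'⟩ := h
  rcases lt_trichotomy k1 k2 with hk | rfl | hk
  · rw [h2 _ hk] at h1'; exact lt_irrefl _ h1'
  · exact lt_irrefl _ (h1'.trans h2')
  · rw [h1 _ hk] at h2'; exact lt_irrefl _ h2'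

lemma lexLt_or (σ ω : Omega) : σ = ω ∨ lexLt σ ω ∨ lexLt ω σ := by
  by_cases h : σ = ω
  · exact Or.inl h
  · right
    have hne : ∃ k, σ k ≠ ω k := by
      by_contra hc; push_neg at hc; exact h (funext hc)
    classical
    let k := Nat.find hne
    have hk : σ k ≠ ω k := Nat.find_spec hne
    have hag : ∀ i, i < k → σ i = ω i := fun i hi => by
      by_contra hci; exact absurd hi (not_lt.mpr (Nat.find_le hci))
    rcases lt_or_gt_of_ne hk with hlt | hgt
    · exact Or.inl ⟨k, hag, hlt⟩
    · exact Or.inr ⟨k, fun i hi => (hag i hi).symm, hgt⟩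

lemma lexLe_iff_not_lt {σ ω : Omega} : lexLe σ ω ↔ ¬ lexLt ω σ := by
  constructor
  · rintro (h | rfl)
    · exact lexLt_asymm h
    · exact lexLt_irrefl _
  · intro h
    rcases lexLt_or σ ω with rfl | h' | h'
    · exact Or.inr rfl
    · exact Or.inl h'
    · exact absurd h' h

lemma shift_iter (ω : Omega) (n i : ℕ) : shift^[n] ω i = ω (i + n) := by
  induction n generalizing ω i with
  | zero => rfl
  | succ n ih =>
    rw [Function.iterate_succ_apply]
    rw [ih (shift ω) i]
    show ω (i + n + 1) = ω (i + (n + 1))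
    ring_nf

/-- Concatenation: first `L` letters from `w`, then `δ`. -/
def cat (w : ℕ → Bool) (L : ℕ) (δ : Omega) : Omega :=
  fun i => if i < L then w i else δ (i - L)

lemma shift_cat_le {w : ℕ → Bool} {L n : ℕ} (h : n ≤ L) (δ : Omega) :
    shift^[n] (cat w L δ) = cat (fun i => w (i + n)) (L - n) δ := by
  funext i
  rw [shift_iter]
  show (if i + n < L then w (i + n) else δ (i + n - L)) = _
  show _ = (if i < L - n then w (i + n) else δ (i - (L - n)))
  rcases lt_or_ge (i + n) L with h' | h'
  · rw [if_pos h', if_pos (by omega)]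
  · rw [if_neg (by omega), if_neg (by omega)]
    congr 1; omega

lemma shift_cat_self (w : ℕ → Bool) (L : ℕ) (δ : Omega) :
    shift^[L] (cat w L δ) = δ := by
  funext i
  rw [shift_iter]
  show (if i + L < L then w (i + L) else δ (i + L - L)) = δ i
  rw [if_neg (by omega)]; congr 1; omega

lemma cat_apply_lt {w : ℕ → Bool} {L i : ℕ} (h : i < L) (δ : Omega) :
    cat w L δ i = w i := if_pos h

lemma lexLt_cat_of_match {ρ : Omega} {w : ℕ → Bool} {L : ℕ}
    (h : ∀ i, i < L → w i = ρ i) (δ : Omega) :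
    lexLt ρ (cat w L δ) ↔ lexLt (shift^[L] ρ) δ := by
  constructor
  · rintro ⟨k, hag, hlt⟩
    have hkL : L ≤ k := by
      by_contra hc; push_neg at hc
      rw [cat_apply_lt hc, h k hc] at hlt; exact lt_irrefl _ hlt
    refine ⟨k - L, fun i hi => ?_, ?_⟩
    · rw [shift_iter]
      have := hag (i + L) (by omega)
      show ρ (i + L) = δ i
      rw [this]
      show cat w L δ (i + L) = δ i
      unfold cat; rw [if_neg (by omega)]; congr 1; omega
    · rw [shift_iter]
      have : cat w L δ k = δ (k - L) := by
        unfold cat; rw [if_neg (by omega)]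
      rw [this] at hlt
      show ρ (k - L + L) < δ (k - L)
      rwa [Nat.sub_add_cancel hkL]
  · rintro ⟨k, hag, hlt⟩
    refine ⟨k + L, fun i hi => ?_, ?_⟩
    · unfold cat
      rcases lt_or_ge i L with h' | h'
      · rw [if_pos h', h i h']
      · rw [if_neg (by omega)]
        have := hag (i - L) (by omega)
        rw [shift_iter] at this
        rw [show i - L + L = i by omega] at this
        exact this
    · show ρ (k + L) < cat w L δ (k + L)
      unfold cat; rw [if_neg (by omega), show k + L - L = k by omega]
      rw [shift_iter] at hlt; exact hlt

lemma lexLt_cat_of_match' {ρ : Omega} {w : ℕ → Bool} {L : ℕ}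
    (h : ∀ i, i < L → w i = ρ i) (δ : Omega) :
    lexLt (cat w L δ) ρ ↔ lexLt δ (shift^[L] ρ) := by
  constructor
  · rintro ⟨k, hag, hlt⟩
    have hkL : L ≤ k := by
      by_contra hc; push_neg at hc
      rw [cat_apply_lt hc, h k hc] at hlt; exact lt_irrefl _ hlt
    refine ⟨k - L, fun i hi => ?_, ?_⟩
    · rw [shift_iter]
      have := hag (i + L) (by omega)
      show δ i = ρ (i + L)
      rw [← this]
      show δ i = cat w L δ (i + L)
      unfold cat; rw [if_neg (by omega)]; congr 1; omega
    · rw [shift_iter]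
      have : cat w L δ k = δ (k - L) := by
        unfold cat; rw [if_neg (by omega)]
      rw [this] at hlt
      show δ (k - L) < ρ (k - L + L)
      rwa [Nat.sub_add_cancel hkL]
  · rintro ⟨k, hag, hlt⟩
    refine ⟨k + L, fun i hi => ?_, ?_⟩
    · unfold cat
      rcases lt_or_ge i L with h' | h'
      · rw [if_pos h', h i h']
      · rw [if_neg (by omega)]
        have := hag (i - L) (by omega)
        rw [shift_iter] at this
        rw [show i - L + L = i by omega] at this
        exact this
    · show cat w L δ (k + L) < ρ (k + L)
      unfold cat; rw [if_neg (by omega), show k + L - L = k by omega]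
      rw [shift_iter] at hlt; exact hlt

lemma lexLt_cat_of_mismatch {ρ : Omega} {w : ℕ → Bool} {L k : ℕ}
    (hk : k < L) (hag : ∀ i, i < k → w i = ρ i) (hne : w k ≠ ρ k) (δ : Omega) :
    lexLt ρ (cat w L δ) ↔ ρ k < w k := by
  constructor
  · rintro ⟨k', hag', hlt⟩
    rcases lt_trichotomy k' k with h' | rfl | h'
    · rw [cat_apply_lt (show k' < L by omega), hag k' h'] at hlt
      exact absurd hlt (lt_irrefl _)
    · rwa [cat_apply_lt hk] at hlt
    · exfalso
      have := hag' k h'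
      rw [cat_apply_lt hk] at this
      exact hne this.symm
  · intro hlt
    exact ⟨k, fun i hi => by rw [← hag i hi, cat_apply_lt (by omega)],
      by rwa [cat_apply_lt hk]⟩

lemma lexLt_cat_of_mismatch' {ρ : Omega} {w : ℕ → Bool} {L k : ℕ}
    (hk : k < L) (hag : ∀ i, i < k → w i = ρ i) (hne : w k ≠ ρ k) (δ : Omega) :
    lexLt (cat w L δ) ρ ↔ w k < ρ k := by
  constructor
  · rintro ⟨k', hag', hlt⟩
    rcases lt_trichotomy k' k with h' | rfl | h'
    · rw [cat_apply_lt (show k' < L by omega), hag k' h'] at hlt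
      exact absurd hlt (lt_irrefl _)
    · rwa [cat_apply_lt hk] at hlt
    · exfalso
      have := hag' k h'
      rw [cat_apply_lt hk] at this
      exact hne this
  · intro hlt
    exact ⟨k, fun i hi => by rw [← hag i hi, cat_apply_lt (by omega)],
      by rwa [cat_apply_lt hk]⟩

section Classify

variable {α β : Omega}

lemma classifyP (hα0 : α 0 = false) (hβ0 : β 0 = true)
    (w : ℕ → Bool) (L : ℕ) (hL : 0 < L) :
    (∀ δ₁ δ₂ : Omega,
        (¬ (lexLt α (cat w L δ₁) ∧ lexLe (cat w L δ₁) β)) ↔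
        (¬ (lexLt α (cat w L δ₂) ∧ lexLe (cat w L δ₂) β))) ∨
    (∀ δ : Omega, (¬ (lexLt α (cat w L δ) ∧ lexLe (cat w L δ) β)) ↔
        lexLe δ (shift^[L] α)) ∨
    (∀ δ : Omega, (¬ (lexLt α (cat w L δ) ∧ lexLe (cat w L δ) β)) ↔
        lexLt (shift^[L] β) δ) := by
  by_cases hmα : ∀ i, i < L → w i = α i
  · right; left; intro δ
    have hw0 : w 0 = false := by rw [hmα 0 hL, hα0]
    have h1 : lexLt α (cat w L δ) ↔ lexLt (shift^[L] α) δ := lexLt_cat_of_match hmα δ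
    have h2 : lexLe (cat w L δ) β := by
      rw [lexLe_iff_not_lt,
        lexLt_cat_of_mismatch hL (fun i hi => absurd hi (Nat.not_lt_zero i))
          (by rw [hw0, hβ0]; decide) δ, hβ0, hw0]
      decide
    constructor
    · intro h
      rw [lexLe_iff_not_lt]
      intro hlt
      exact h ⟨h1.mpr hlt, h2⟩
    · rintro h ⟨ha, -⟩
      exact (lexLe_iff_not_lt.mp h) (h1.mp ha)
  · by_cases hmβ : ∀ i, i < L → w i = β i
    · right; right; intro δ
      have hw0 : w 0 = true := by rw [hmβ 0 hL, hβ0]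
      have h1 : lexLt α (cat w L δ) := by
        rw [lexLt_cat_of_mismatch hL (fun i hi => absurd hi (Nat.not_lt_zero i))
          (by rw [hw0, hα0]; decide) δ, hα0, hw0]
        decide
      have h2 : lexLe (cat w L δ) β ↔ ¬ lexLt (shift^[L] β) δ := by
        rw [lexLe_iff_not_lt, lexLt_cat_of_match hmβ δ]
      constructor
      · intro h
        by_contra hc
        exact h ⟨h1, h2.mpr hc⟩
      · rintro h ⟨-, hb⟩
        exact (h2.mp hb) h
    · left; intro δ₁ δ₂
      push_neg at hmα hmβ
      obtain ⟨iα, hiαL, hiα⟩ := hmα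
      obtain ⟨iβ, hiβL, hiβ⟩ := hmβ
      classical
      have hexα : ∃ i, w i ≠ α i := ⟨iα, hiα⟩
      have hexβ : ∃ i, w i ≠ β i := ⟨iβ, hiβ⟩
      set kα := Nat.find hexα with hkαdef
      set kβ := Nat.find hexβ with hkβdef
      have hkαL : kα < L := lt_of_le_of_lt (Nat.find_le hiα) hiαL
      have hkβL : kβ < L := lt_of_le_of_lt (Nat.find_le hiβ) hiβL
      have hagα : ∀ i, i < kα → w i = α i := fun i hi => by
        have := Nat.find_min hexα hi; simpa using this
      have hagβ : ∀ i, i < kβ → w i = β i := fun i hi => by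
        have := Nat.find_min hexβ hi; simpa using this
      rw [lexLe_iff_not_lt, lexLe_iff_not_lt,
        lexLt_cat_of_mismatch hkαL hagα (Nat.find_spec hexα) δ₁,
        lexLt_cat_of_mismatch hkαL hagα (Nat.find_spec hexα) δ₂,
        lexLt_cat_of_mismatch hkβL hagβ (Nat.find_spec hexβ) δ₁,
        lexLt_cat_of_mismatch hkβL hagβ (Nat.find_spec hexβ) δ₂]

lemma classifyQ (w : ℕ → Bool) (L : ℕ) :
    (∀ δ₁ δ₂ : Omega, lexLe (cat w L δ₁) α ↔ lexLe (cat w L δ₂) α) ∨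
    (∀ δ : Omega, lexLe (cat w L δ) α ↔ lexLe δ (shift^[L] α)) := by
  by_cases hm : ∀ i, i < L → w i = α i
  · right; intro δ
    rw [lexLe_iff_not_lt, lexLt_cat_of_match hm δ, ← lexLe_iff_not_lt]
  · left; intro δ₁ δ₂
    push_neg at hm
    obtain ⟨i0, hi0L, hi0⟩ := hm
    classical
    have hex : ∃ i, w i ≠ α i := ⟨i0, hi0⟩
    set k := Nat.find hex
    have hkL : k < L := lt_of_le_of_lt (Nat.find_le hi0) hi0L
    have hag : ∀ i, i < k → w i = α i := fun i hi => by
      have := Nat.find_min hex hi; simpa using this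
    rw [lexLe_iff_not_lt, lexLe_iff_not_lt,
      lexLt_cat_of_mismatch hkL hag (Nat.find_spec hex) δ₁,
      lexLt_cat_of_mismatch hkL hag (Nat.find_spec hex) δ₂]

end Classify

section Closure

variable {α β : Omega}

lemma shift_cons0 (ω : Omega) : shift (cons0 ω) = ω := rfl

lemma cons0_mem (hα0 : α 0 = false) (hα1 : α 1 = true) {ω : Omega}
    (hω : ω ∈ Omega0Minus α β) : cons0 ω ∈ Omega0Minus α β := by
  obtain ⟨hωm, hωle⟩ := hω
  constructor
  · intro n
    cases n with
    | zero =>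
      simp only [Function.iterate_zero, id]
      rintro ⟨h1, -⟩
      exact (lexLe_iff_not_lt.mp hωle) h1
    | succ n =>
      rw [Function.iterate_succ_apply, shift_cons0]
      exact hωm n
  · left
    refine ⟨1, fun i hi => ?_, ?_⟩
    · have : i = 0 := by omega
      subst this
      show (false : Bool) = α 0
      rw [hα0]
    · show cons0 (cons0 ω) 1 < α 1
      rw [hα1]
      show (false : Bool) < true
      decide

lemma pad_mem (hα0 : α 0 = false) (hα1 : α 1 = true) (k : ℕ) {ω : Omega}
    (hω : ω ∈ Omega0Minus α β) :
    cat (fun _ => false) k ω ∈ Omega0Minus α β := by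
  induction k with
  | zero =>
    have : cat (fun _ => false) 0 ω = ω := by
      funext i; simp [cat]
    rwa [this]
  | succ k ih =>
    have : cat (fun _ => false) (k + 1) ω = cons0 (cat (fun _ => false) k ω) := by
      funext i
      cases i with
      | zero => simp [cat, cons0]
      | succ i =>
        show cat (fun _ => false) (k+1) ω (i+1) = cat (fun _ => false) k ω i
        unfold cat
        rcases lt_or_ge i k with h | h
        · rw [if_pos (by omega), if_pos h]
        · rw [if_neg (by omega), if_neg (by omega)]
          congr 1; omega
    rw [this]
    exact cons0_mem hα0 hα1 ih

lemma le_alpha_of_mem (hβ0 : β 0 = true) {ρ : Omega}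
    (hρ : ρ ∈ OmegaMinus α β) (h0 : ρ 0 = false) : lexLe ρ α := by
  rw [lexLe_iff_not_lt]
  intro hlt
  have h := hρ 0
  simp only [Function.iterate_zero, id] at h
  apply h
  refine ⟨hlt, Or.inl ⟨0, fun i hi => absurd hi (Nat.not_lt_zero i), ?_⟩⟩
  rw [h0, hβ0]
  decide

lemma gamma_mem (hα0 : α 0 = false) (hα1 : α 1 = true) (hβ0 : β 0 = true)
    {d : ℤ → Bool} (hd : d ∈ dotMinus α β) {M : ℤ}
    (hsupp : ∀ j, j < M → d j = false) :
    (fun i : ℕ => d (M + i)) ∈ Omega0Minus α β := by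
  obtain ⟨m, γ₀, hγ₀, hzero, hmatch⟩ := hd
  rcases le_or_gt M m with hMm | hmM
  · set k := (m - M).toNat with hkdef
    have hk : (k : ℤ) = m - M := by omega
    have he : (fun i : ℕ => d (M + i)) = cat (fun _ => false) k γ₀ := by
      funext i
      unfold cat
      rcases lt_or_ge i k with h | h
      · rw [if_pos h]
        exact hzero _ (by omega)
      · rw [if_neg (by omega)]
        have := hmatch (i - k)
        rw [show m + ((i - k : ℕ) : ℤ) = M + i by omega] at this
        exact this
    rw [he]
    exact pad_mem hα0 hα1 k hγ₀
  · set k := (M - m).toNat with hkdef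
    have hk : (k : ℤ) = M - m := by omega
    have hk1 : 1 ≤ k := by omega
    have he : (fun i : ℕ => d (M + i)) = shift^[k] γ₀ := by
      funext i
      rw [shift_iter]
      have := hmatch (i + k)
      rw [show m + ((i + k : ℕ) : ℤ) = M + i by omega] at this
      exact this
    have hγfalse : ∀ i, i < k → γ₀ i = false := by
      intro i hi
      rw [← hmatch i]
      exact hsupp _ (by omega)
    have hmem : ∀ j : ℕ, shift^[j] γ₀ ∈ OmegaMinus α β := by
      intro j n
      rw [← Function.iterate_add_apply]
      exact hγ₀.1 (n + j)
    rw [he]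
    constructor
    · intro n
      rw [← Function.iterate_add_apply]
      exact hγ₀.1 (n + k)
    · have hc : cons0 (shift^[k] γ₀) = shift^[k-1] γ₀ := by
        funext i
        cases i with
        | zero =>
          show (false : Bool) = shift^[k-1] γ₀ 0
          rw [shift_iter]
          exact (hγfalse _ (by omega)).symm
        | succ i =>
          show shift^[k] γ₀ i = shift^[k-1] γ₀ (i+1)
          rw [shift_iter, shift_iter]
          congr 1; omega
      rw [hc]
      apply le_alpha_of_mem hβ0 (hmem (k-1))
      rw [shift_iter]
      exact hγfalse _ (by omega)

end Closure

section Analysis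

/-- The tail sum `Σ γ_i b^i`. -/
noncomputable def tailF (b : ℝ) (γ : Omega) : ℝ :=
  ∑' i : ℕ, (if γ i then (1:ℝ) else 0) * b ^ i

lemma summable_tailF {b : ℝ} (hb0 : 0 ≤ b) (hb1 : b < 1) (γ : Omega) :
    Summable fun i : ℕ => (if γ i then (1:ℝ) else 0) * b ^ i := by
  apply Summable.of_nonneg_of_le _ _ (summable_geometric_of_lt_one hb0 hb1)
  · intro i; by_cases h : γ i <;> simp [h, pow_nonneg hb0]
  · intro i; by_cases h : γ i <;> simp [h, pow_nonneg hb0]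

lemma tailF_nonneg {b : ℝ} (hb0 : 0 ≤ b) (γ : Omega) : 0 ≤ tailF b γ := by
  apply tsum_nonneg
  intro i; by_cases h : γ i <;> simp [h, pow_nonneg hb0]

lemma tailF_le {b : ℝ} (hb0 : 0 ≤ b) (hb1 : b < 1) (γ : Omega) :
    tailF b γ ≤ (1 - b)⁻¹ := by
  rw [← tsum_geometric_of_lt_one hb0 hb1]
  apply Summable.tsum_le_tsum _ (summable_tailF hb0 hb1 γ) (summable_geometric_of_lt_one hb0 hb1)
  intro i; by_cases h : γ i <;> simp [h, pow_nonneg hb0]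

lemma tailF_cat {b : ℝ} (hb0 : 0 ≤ b) (hb1 : b < 1) (s : ℕ → Bool) (L : ℕ) (δ : Omega) :
    tailF b (cat s L δ) =
      (∑ i ∈ Finset.range L, (if s i then (1:ℝ) else 0) * b ^ i) + b ^ L * tailF b δ := by
  have hsum := summable_tailF hb0 hb1 (cat s L δ)
  have hsplit := Summable.sum_add_tsum_nat_add L hsum
  rw [tailF, ← hsplit]
  congr 1
  · apply Finset.sum_congr rfl
    intro i hi
    rw [Finset.mem_range] at hi
    rw [cat_apply_lt hi]
  · have h1 : ∀ i : ℕ, (if cat s L δ (i + L) then (1:ℝ) else 0) * b ^ (i + L)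
        = b ^ L * ((if δ i then (1:ℝ) else 0) * b ^ i) := by
      intro i
      have : cat s L δ (i + L) = δ i := by
        unfold cat; rw [if_neg (by omega)]; congr 1; omega
      rw [this, pow_add]; ring
    rw [tsum_congr h1, tsum_mul_left, tailF]

lemma radix_eq {b B : ℝ} (hb0 : 0 < b) (hB : B = 1 / b) (N : ℕ)
    (d : ℤ → Bool) (γ : Omega) (hγ : ∀ i : ℕ, d (-(N:ℤ) + i) = γ i)
    (hsupp : ∀ j : ℤ, j < -(N:ℤ) → d j = false) (hb1 : b < 1) :
    radixVal B d = B ^ N * tailF b γ := by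
  have hBpos : 0 < B := by rw [hB]; positivity
  have hBinv : B⁻¹ = b := by rw [hB, one_div, inv_inv]
  set f : ℤ → ℝ := fun j => (if d j then (1:ℝ) else 0) * B ^ (-j) with hf
  have h1 : ∀ n : ℕ, f ((n:ℤ) - N) = B ^ N * ((if γ n then (1:ℝ) else 0) * b ^ n) := by
    intro n
    show (if d ((n:ℤ) - N) then (1:ℝ) else 0) * B ^ (-((n:ℤ) - N)) = _
    rw [show (n:ℤ) - N = -(N:ℤ) + n by ring, hγ n,
      show -(-(N:ℤ) + n) = (N:ℤ) - n by ring,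
      zpow_sub₀ (ne_of_gt hBpos), zpow_natCast, zpow_natCast,
      div_eq_mul_inv, ← inv_pow, hBinv]
    ring
  have h2 : ∀ n : ℕ, f (-((n:ℤ) + 1) - N) = 0 := by
    intro n
    have hd0 : d (-((n:ℤ) + 1) - N) = false := hsupp _ (by omega)
    show (if d (-((n:ℤ) + 1) - N) then (1:ℝ) else 0) * _ = 0
    rw [hd0]; simp
  have hs1 : Summable fun n : ℕ => f ((n:ℤ) - N) :=
    Summable.congr (((summable_tailF hb0.le hb1 γ).mul_left (B ^ N))) (fun n => (h1 n).symm)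
  have hs2 : Summable fun n : ℕ => f (-((n:ℤ) + 1) - N) :=
    summable_zero.congr (fun n => (h2 n).symm)
  have he : (∑' (c : ℤ), f ((Equiv.subRight (N:ℤ)) c)) = ∑' j : ℤ, f j :=
    (Equiv.subRight (N:ℤ)).tsum_eq f
  have he' : ∀ c : ℤ, f ((Equiv.subRight (N:ℤ)) c) = f (c - N) := fun c => rfl
  show (∑' j : ℤ, f j) = B ^ N * tailF b γ
  rw [← he, tsum_congr he',
    tsum_of_nat_of_neg_add_one (by exact hs1) (by exact hs2),
    tsum_congr h1, tsum_congr h2, tsum_zero, tsum_mul_left, add_zero, tailF]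

lemma sSup_affine {c H : ℝ} (hc : 0 < c) {S : Set ℝ} (hne : S.Nonempty)
    (hbdd : BddAbove S) :
    sSup ((fun x => H + c * x) '' S) = H + c * sSup S := by
  apply le_antisymm
  · apply csSup_le (hne.image _)
    rintro y ⟨x, hx, rfl⟩
    have h1 := le_csSup hbdd hx
    have h2 : c * x ≤ c * sSup S := mul_le_mul_of_nonneg_left h1 hc.le
    dsimp only
    linarith
  · obtain ⟨M, hM⟩ := hbdd
    have hbddI : BddAbove ((fun x => H + c * x) '' S) := by
      refine ⟨H + c * M, ?_⟩
      rintro y ⟨x, hx, rfl⟩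
      have h1 := hM hx
      have h2 : c * x ≤ c * M := mul_le_mul_of_nonneg_left h1 hc.le
      dsimp only
      linarith
    have h1 : sSup S ≤ (sSup ((fun x => H + c * x) '' S) - H) / c := by
      apply csSup_le hne
      intro x hx
      have h2 := le_csSup hbddI ⟨x, hx, rfl⟩
      dsimp only at h2
      rw [le_div_iff₀ hc]
      linarith [mul_comm x c]
    rw [le_div_iff₀ hc] at h1
    linarith [mul_comm (sSup S) c]

lemma sInf_affine {c H : ℝ} (hc : 0 < c) {S : Set ℝ} (hne : S.Nonempty)
    (hbdd : BddBelow S) :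
    sInf ((fun x => H + c * x) '' S) = H + c * sInf S := by
  apply le_antisymm
  · obtain ⟨M, hM⟩ := hbdd
    have hbddI : BddBelow ((fun x => H + c * x) '' S) := by
      refine ⟨H + c * M, ?_⟩
      rintro y ⟨x, hx, rfl⟩
      have h1 := hM hx
      have h2 : c * M ≤ c * x := mul_le_mul_of_nonneg_left h1 hc.le
      dsimp only
      linarith
    have h1 : (sInf ((fun x => H + c * x) '' S) - H) / c ≤ sInf S := by
      apply le_csInf hne
      intro x hx
      have h2 := csInf_le hbddI ⟨x, hx, rfl⟩
      dsimp only at h2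
      rw [div_le_iff₀ hc]
      linarith [mul_comm x c]
    rw [div_le_iff₀ hc] at h1
    linarith [mul_comm (sInf S) c]
  · apply le_csInf (hne.image _)
    rintro y ⟨x, hx, rfl⟩
    have h1 := csInf_le hbdd hx
    have h2 : c * sInf S ≤ c * x := mul_le_mul_of_nonneg_left h1 hc.le
    dsimp only
    linarith

lemma range_shift_finite {ω : Omega} (h : EventuallyPeriodic ω) :
    (Set.range fun L : ℕ => shift^[L] ω).Finite := by
  obtain ⟨m, q, hq, hper⟩ := h
  have key : ∀ L, ∃ L' < m + q, shift^[L] ω = shift^[L'] ω := by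
    intro L
    induction L using Nat.strong_induction_on with
    | _ L ih =>
      rcases lt_or_ge L (m + q) with h | h
      · exact ⟨L, h, rfl⟩
      · have heq : shift^[L] ω = shift^[L - q] ω := by
          funext i
          rw [shift_iter, shift_iter]
          have := hper (i + (L - q) - m)
          rw [show m + (i + (L - q) - m) + q = i + L by omega,
            show m + (i + (L - q) - m) = i + (L - q) by omega] at this
          exact this
        obtain ⟨L', hL', he⟩ := ih (L - q) (by omega)
        exact ⟨L', hL', heq.trans he⟩
  apply Set.Finite.subset (Set.Finite.image (fun L => shift^[L] ω) (Set.finite_Iio (m + q)))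
  rintro _ ⟨L, rfl⟩
  obtain ⟨L', hL', he⟩ := key L
  exact ⟨L', hL', he.symm⟩

end Analysis

/-- For an admissible non-null pair `(α,β)` with `α` and `β` eventually
periodic, `B = B_{(α,β)}` and `Γ = Ω^•_{(α,β,−)}`, the set of tile lengths
`sup T′_s − inf T′_s` over nonempty tiles is finite. -/
theorem stmt_16 (α β : Omega) (hadm : Admissible α β)
    (hnonnull : 0 < growth (OmegaUnion α β))
    (hαper : EventuallyPeriodic α) (hβper : EventuallyPeriodic β)
    (b B : ℝ) (hb : IsLeast (baseSet α β) b) (hB : B = 1 / b) :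
    {l : ℝ | ∃ (N : ℕ) (s : ℕ → Bool), (tileSet (dotMinus α β) B N s).Nonempty ∧
      l = sSup (tileSet (dotMinus α β) B N s) - sInf (tileSet (dotMinus α β) B N s)}.Finite := by
  obtain ⟨hα0, hα1, hβ0, hβ1, -, -⟩ := hadm
  obtain ⟨⟨⟨hb5, hb1⟩, -⟩, -⟩ := hb
  have hb0 : (0:ℝ) < b := lt_of_lt_of_le (by norm_num) hb5
  have hBb : B * b = 1 := by rw [hB]; field_simp
  have hBpos : (0:ℝ) < B := by rw [hB]; positivity
  set Sα := Set.range fun L : ℕ => shift^[L] α with hSαdef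
  set Sβ := Set.range fun L : ℕ => shift^[L] β with hSβdef
  set Cand : Set Omega × Set Omega → Set Omega := fun p =>
    OmegaMinus α β ∩ {δ | ∀ ν ∈ p.1, lexLe δ ν} ∩ {δ | ∀ μ ∈ p.2, lexLt μ δ} with hCand
  set φ : Set Omega → ℝ :=
    fun G => b * (sSup (tailF b '' G) - sInf (tailF b '' G)) with hφ
  have hfin : (({T | T ⊆ Sα} ×ˢ {U | U ⊆ Sβ}) : Set (Set Omega × Set Omega)).Finite :=
    ((range_shift_finite hαper).finite_subsets).prod ((range_shift_finite hβper).finite_subsets)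
  apply Set.Finite.subset (hfin.image (fun p => φ (Cand p)))
  rintro l ⟨N, s, hne, hl⟩
  set Fol : Set Omega := {δ | cat s (N+1) δ ∈ Omega0Minus α β} with hFoldef
  set H : ℝ := B ^ N * ∑ i ∈ Finset.range (N+1), (if s i then (1:ℝ) else 0) * b ^ i with hHdef
  have hpow : B ^ N * b ^ (N+1) = b := by
    rw [pow_succ, ← mul_assoc, ← mul_pow, hBb, one_pow, one_mul]
  -- the tile is an affine image of `tailF b '' Fol`
  have htile : tileSet (dotMinus α β) B N s =
      (fun x => H + b * x) '' (tailF b '' Fol) := by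
    ext x
    constructor
    · rintro ⟨d, hd, hsupp, hpre, rfl⟩
      set γ : Omega := fun i => d (-(N:ℤ) + i) with hγdef
      have hγmem : γ ∈ Omega0Minus α β := gamma_mem hα0 hα1 hβ0 hd hsupp
      set δ : Omega := shift^[N+1] γ with hδdef
      have hγcat : γ = cat s (N+1) δ := by
        funext i
        rcases lt_or_ge i (N+1) with h | h
        · rw [cat_apply_lt h]
          exact hpre i (by omega)
        · show γ i = cat s (N+1) δ i
          unfold cat
          rw [if_neg (by omega)]
          show γ i = shift^[N+1] γ (i - (N+1))
          rw [shift_iter]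
          congr 1
          omega
      have hδFol : δ ∈ Fol := by
        show cat s (N+1) δ ∈ Omega0Minus α β
        rw [← hγcat]
        exact hγmem
      refine ⟨tailF b δ, ⟨δ, hδFol, rfl⟩, ?_⟩
      rw [radix_eq hb0 hB N d γ (fun i => rfl) hsupp hb1, hγcat,
        tailF_cat hb0.le hb1 s (N+1) δ, mul_add, ← mul_assoc, hpow, hHdef]
    · rintro ⟨y, ⟨δ, hδFol, rfl⟩, rfl⟩
      set γ : Omega := cat s (N+1) δ with hγdef
      set d : ℤ → Bool := fun j => if h : 0 ≤ j + N then γ (j + N).toNat else false with hddef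
      have hdapp : ∀ i : ℕ, d (-(N:ℤ) + i) = γ i := by
        intro i
        show (if h : 0 ≤ (-(N:ℤ) + i) + N then γ ((-(N:ℤ) + i) + N).toNat else false) = γ i
        rw [dif_pos (by omega)]
        congr 1
        omega
      have hdsupp : ∀ j : ℤ, j < -(N:ℤ) → d j = false := by
        intro j hj
        show (if h : 0 ≤ j + N then γ (j + N).toNat else false) = false
        rw [dif_neg (by omega)]
      refine ⟨d, ⟨-(N:ℤ), γ, hδFol, hdsupp, hdapp⟩, hdsupp, ?_, ?_⟩
      · intro i hi
        rw [hdapp i]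
        show cat s (N+1) δ i = s i
        rw [cat_apply_lt (by omega)]
      · rw [radix_eq hb0 hB N d γ hdapp hdsupp hb1]
        show B ^ N * tailF b (cat s (N+1) δ) = H + b * tailF b δ
        rw [tailF_cat hb0.le hb1 s (N+1) δ, mul_add, ← mul_assoc, hpow, hHdef]
  -- basic facts about `tailF b '' Fol`
  have hFolne : Fol.Nonempty := by
    obtain ⟨x, hx⟩ := hne
    rw [htile] at hx
    obtain ⟨y, ⟨δ, hδ, -⟩, -⟩ := hx
    exact ⟨δ, hδ⟩
  have hSne : (tailF b '' Fol).Nonempty := hFolne.image _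
  have hbddA : BddAbove (tailF b '' Fol) := by
    refine ⟨(1-b)⁻¹, ?_⟩
    rintro y ⟨δ, -, rfl⟩
    exact tailF_le hb0.le hb1 δ
  have hbddB : BddBelow (tailF b '' Fol) := by
    refine ⟨0, ?_⟩
    rintro y ⟨δ, -, rfl⟩
    exact tailF_nonneg hb0.le δ
  have hlval : l = φ Fol := by
    rw [hl, htile, sSup_affine hb0 hSne hbddA, sInf_affine hb0 hSne hbddB, hφ]
    ring
  -- the auxiliary string for the `cons0` condition
  set s' : ℕ → Bool := fun i => if i = 0 then false else s (i - 1) with hs'def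
  have hcons0cat : ∀ δ : Omega, cons0 (cat s (N+1) δ) = cat s' (N+2) δ := by
    intro δ
    funext i
    cases i with
    | zero =>
      show (false : Bool) = cat s' (N+2) δ 0
      rw [cat_apply_lt (by omega)]
      simp [hs'def]
    | succ i =>
      show cat s (N+1) δ i = cat s' (N+2) δ (i+1)
      unfold cat
      rcases lt_or_ge i (N+1) with h | h
      · rw [if_pos h, if_pos (by omega)]
        simp [hs'def]
      · rw [if_neg (by omega), if_neg (by omega)]
        congr 1
        omega
  -- membership in Fol, condition by condition
  have hmemiff : ∀ δ : Omega, δ ∈ Fol ↔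
      (δ ∈ OmegaMinus α β ∧
       (∀ n, n ≤ N → ¬ (lexLt α (cat (fun i => s (i + n)) (N + 1 - n) δ) ∧
          lexLe (cat (fun i => s (i + n)) (N + 1 - n) δ) β)) ∧
       lexLe (cat s' (N+2) δ) α) := by
    intro δ
    show (cat s (N+1) δ ∈ OmegaMinus α β ∧ lexLe (cons0 (cat s (N+1) δ)) α) ↔ _
    rw [hcons0cat δ]
    constructor
    · rintro ⟨h1, h2⟩
      refine ⟨?_, ?_, h2⟩
      · intro n
        have := h1 (n + (N+1))
        rwa [Function.iterate_add_apply, shift_cat_self] at this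
      · intro n hn
        have := h1 n
        rwa [shift_cat_le (by omega) δ] at this
    · rintro ⟨h1, h2, h3⟩
      refine ⟨?_, h3⟩
      intro n
      rcases le_or_gt n N with hn | hn
      · have := h2 n hn
        rwa [shift_cat_le (by omega) δ]
      · have heq := Function.iterate_add_apply shift (n - (N+1)) (N+1) (cat s (N+1) δ)
        rw [shift_cat_self, show n - (N+1) + (N+1) = n by omega] at heq
        rw [heq]
        exact h1 _
  -- the two half-line families
  set T : Set Omega := {ν ∈ Sα | ∀ δ ∈ Fol, lexLe δ ν} with hTdef
  set U : Set Omega := {μ ∈ Sβ | ∀ δ ∈ Fol, lexLt μ δ} with hUdef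
  obtain ⟨δ₀, hδ₀⟩ := hFolne
  have hFolCand : Fol = Cand (T, U) := by
    apply Set.Subset.antisymm
    · intro δ hδ
      refine ⟨⟨((hmemiff δ).mp hδ).1, ?_⟩, ?_⟩
      · rintro ν ⟨-, hν⟩
        exact hν δ hδ
      · rintro μ ⟨-, hμ⟩
        exact hμ δ hδ
    · rintro δ ⟨⟨hδm, hδT⟩, hδU⟩
      rw [hmemiff]
      refine ⟨hδm, ?_, ?_⟩
      · intro n hn
        have hδ₀P := (((hmemiff δ₀).mp hδ₀).2.1) n hn
        rcases classifyP hα0 hβ0 (fun i => s (i + n)) (N + 1 - n) (by omega)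
          with hconst | hup | hlow
        · exact (hconst δ δ₀).mpr hδ₀P
        · apply (hup δ).mpr
          have hνT : shift^[N + 1 - n] α ∈ T :=
            ⟨⟨N + 1 - n, rfl⟩, fun δ' hδ' =>
              (hup δ').mp ((((hmemiff δ').mp hδ').2.1) n hn)⟩
          exact hδT _ hνT
        · apply (hlow δ).mpr
          have hμU : shift^[N + 1 - n] β ∈ U :=
            ⟨⟨N + 1 - n, rfl⟩, fun δ' hδ' =>
              (hlow δ').mp ((((hmemiff δ').mp hδ').2.1) n hn)⟩
          exact hδU _ hμU
      · rcases classifyQ (α := α) s' (N+2) with hconst | hup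
        · exact (hconst δ δ₀).mpr (((hmemiff δ₀).mp hδ₀).2.2)
        · apply (hup δ).mpr
          have hνT : shift^[N+2] α ∈ T :=
            ⟨⟨N+2, rfl⟩, fun δ' hδ' =>
              (hup δ').mp (((hmemiff δ').mp hδ').2.2)⟩
          exact hδT _ hνT
  refine ⟨(T, U), ⟨?_, ?_⟩, ?_⟩
  · exact Set.sep_subset _ _
  · exact Set.sep_subset _ _
  · show φ (Cand (T, U)) = l
    rw [← hFolCand]
    exact hlval.symm
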